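/- arXiv:2605.20108 — 5 statements merged into one kernel-verified Lean document; each statement's English description precedes it below -/
import Mathlib

section
/- Let n ∈ ℕ, let X, X_I, X_U ⊆ ℝ^n with X_I ⊆ X and X_U ⊆ X, let f : ℝ^n → ℝ^n satisfy f(x) ∈ X for every x ∈ X, let k ≥ 1 be a natural number, and let ε ≥ 0 be a real number. Suppose B : ℝ^n → ℝ satisfies: (i) B(x) ≤ 0 for all x ∈ X_I; (ii) B(x) > (k−1)ε for all x ∈ X_U; (iii) for all x ∈ X with B(x) ≤ (k−1)ε, B(f(x)) ≤ B(x) + ε; (iv) for all x ∈ X with B(x) ≤ 0, B(f^[k](x)) ≤ B(x). Then for every x₀ ∈ X_I and every t ∈ ℕ, the trajectory point f^[t](x₀) does not belong to X_U; i.e., the system is safe. -/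
/-- **Safety via a k-inductive barrier certificate (Theorem 1).**
If `B` satisfies the k-inductive barrier certificate conditions (i)-(iv), then
every trajectory starting in the initial region `X_I` never reaches the unsafe
region `X_U`. -/
theorem k_inductive_barrier_safety
    (n : ℕ) (X X_I X_U : Set (Fin n → ℝ))
    (hI : X_I ⊆ X) (hU : X_U ⊆ X)
    (f : (Fin n → ℝ) → (Fin n → ℝ)) (hf : ∀ x ∈ X, f x ∈ X)
    (k : ℕ) (hk : 1 ≤ k) (ε : ℝ) (hε : 0 ≤ ε)
    (B : (Fin n → ℝ) → ℝ)
    (h1 : ∀ x ∈ X_I, B x ≤ 0)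
    (h2 : ∀ x ∈ X_U, B x > (k - 1 : ℕ) * ε)
    (h3 : ∀ x ∈ X, B x ≤ (k - 1 : ℕ) * ε → B (f x) ≤ B x + ε)
    (h4 : ∀ x ∈ X, B x ≤ 0 → B (f^[k] x) ≤ B x) :
    ∀ x₀ ∈ X_I, ∀ t : ℕ, f^[t] x₀ ∉ X_U := by
  intro x₀ hx₀ t hTU
  have hX : ∀ s : ℕ, f^[s] x₀ ∈ X := by
    intro s; induction s with
    | zero => exact hI hx₀
    | succ s ih => rw [Function.iterate_succ_apply']; exact hf _ ih
  have hbase : ∀ q : ℕ, B (f^[q * k] x₀) ≤ 0 := by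
    intro q; induction q with
    | zero => simpa using h1 x₀ hx₀
    | succ q ih =>
      have he : (q + 1) * k = k + q * k := by ring
      rw [he, Function.iterate_add_apply]
      exact (h4 _ (hX _) ih).trans ih
  have hwin : ∀ q r : ℕ, r < k → B (f^[q * k + r] x₀) ≤ r * ε := by
    intro q r hr
    induction r with
    | zero => simpa using hbase q
    | succ r ih =>
      have hr' : r < k := Nat.lt_of_succ_lt hr
      have hle : (r : ℝ) * ε ≤ (k - 1 : ℕ) * ε := by
        apply mul_le_mul_of_nonneg_right _ hε
        exact_mod_cast Nat.le_pred_of_lt hr'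
      have ihr := ih hr'
      have hstep := h3 _ (hX (q * k + r)) (ihr.trans hle)
      have he : q * k + (r + 1) = (q * k + r) + 1 := rfl
      rw [he, Function.iterate_succ_apply']
      push_cast
      linarith
  have ht : t = (t / k) * k + t % k := by
    rw [Nat.mul_comm, Nat.div_add_mod]
  have hrk : t % k < k := Nat.mod_lt _ hk
  have hB := hwin (t / k) (t % k) hrk
  rw [← ht] at hB
  have hle : ((t % k : ℕ) : ℝ) * ε ≤ (k - 1 : ℕ) * ε := by
    apply mul_le_mul_of_nonneg_right _ hε
    exact_mod_cast Nat.le_pred_of_lt hrk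
  have := h2 _ hTU
  linarith
end

section
/- Let n ∈ ℕ, let X, X_I ⊆ ℝ^n with X_I ⊆ X, let f : ℝ^n → ℝ^n satisfy f(x) ∈ X for every x ∈ X, let k ≥ 1 be a natural number, and let ε ≥ 0 be a real number. Suppose B : ℝ^n → ℝ satisfies: (i) B(x) ≤ 0 for all x ∈ X_I; (iii) for all x ∈ X with B(x) ≤ (k−1)ε, B(f(x)) ≤ B(x) + ε; (iv) for all x ∈ X with B(x) ≤ 0, B(f^[k](x)) ≤ B(x). Then for every x₀ ∈ X_I: (a) B(f^[m·k](x₀)) ≤ 0 for every m ∈ ℕ, and (b) B(f^[t](x₀)) ≤ (k−1)ε for every t ∈ ℕ; i.e., along any trajectory started in X_I the barrier value never exceeds (k−1)ε. -/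
/-- **Barrier values along trajectories from the initial set.**
Under the initial-set, one-step, and k-step conditions of a k-inductive
barrier certificate, along any trajectory started in `X_I`:
(a) the barrier value is nonpositive at every multiple of `k` steps, and
(b) the barrier value never exceeds `(k-1)ε`. -/
theorem k_inductive_barrier_bound
    (n : ℕ) (X X_I : Set (Fin n → ℝ)) (hI : X_I ⊆ X)
    (f : (Fin n → ℝ) → (Fin n → ℝ)) (hf : ∀ x ∈ X, f x ∈ X)
    (k : ℕ) (hk : 1 ≤ k) (ε : ℝ) (hε : 0 ≤ ε)
    (B : (Fin n → ℝ) → ℝ)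
    (h1 : ∀ x ∈ X_I, B x ≤ 0)
    (h3 : ∀ x ∈ X, B x ≤ (k - 1 : ℕ) * ε → B (f x) ≤ B x + ε)
    (h4 : ∀ x ∈ X, B x ≤ 0 → B (f^[k] x) ≤ B x) :
    ∀ x₀ ∈ X_I,
      (∀ m : ℕ, B (f^[m * k] x₀) ≤ 0) ∧
      (∀ t : ℕ, B (f^[t] x₀) ≤ (k - 1 : ℕ) * ε) := by
  intro x₀ hx₀
  have hX : ∀ t : ℕ, f^[t] x₀ ∈ X := by
    intro t
    induction t with
    | zero => exact hI hx₀
    | succ t ih => rw [Function.iterate_succ_apply']; exact hf _ ih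
  have ha : ∀ m : ℕ, B (f^[m * k] x₀) ≤ 0 := by
    intro m
    induction m with
    | zero => simpa using h1 x₀ hx₀
    | succ m ih =>
      have : f^[(m + 1) * k] x₀ = f^[k] (f^[m * k] x₀) := by
        rw [← Function.iterate_add_apply]; ring_nf
      rw [this]
      exact le_trans (h4 _ (hX _) ih) ih
  refine ⟨ha, ?_⟩
  -- intermediate bound
  have hstep : ∀ m j : ℕ, j ≤ k - 1 → B (f^[m * k + j] x₀) ≤ (j : ℝ) * ε := by
    intro m j hj
    induction j with
    | zero => simpa using ha m
    | succ j ih =>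
      have hj' : j ≤ k - 1 := Nat.le_of_succ_le hj
      have hb : B (f^[m * k + j] x₀) ≤ (j : ℝ) * ε := ih hj'
      have hle : (j : ℝ) * ε ≤ ((k - 1 : ℕ) : ℝ) * ε :=
        mul_le_mul_of_nonneg_right (by exact_mod_cast hj') hε
      have := h3 _ (hX (m * k + j)) (hb.trans hle)
      have heq : f^[m * k + (j + 1)] x₀ = f (f^[m * k + j] x₀) := by
        rw [← Nat.add_assoc, Function.iterate_succ_apply']
      rw [heq]
      calc B (f (f^[m * k + j] x₀)) ≤ B (f^[m * k + j] x₀) + ε := this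
        _ ≤ (j : ℝ) * ε + ε := by linarith
        _ = ((j + 1 : ℕ) : ℝ) * ε := by push_cast; ring
  intro t
  have hdiv : t = t / k * k + t % k := (Nat.div_add_mod' t k).symm
  have hr : t % k ≤ k - 1 := Nat.le_sub_one_of_lt (Nat.mod_lt _ hk)
  calc B (f^[t] x₀) = B (f^[t / k * k + t % k] x₀) := by rw [← hdiv]
    _ ≤ ((t % k : ℕ) : ℝ) * ε := hstep _ _ hr
    _ ≤ ((k - 1 : ℕ) : ℝ) * ε := mul_le_mul_of_nonneg_right (by exact_mod_cast hr) hε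
end

section
/- Let n ∈ ℕ, let X ⊆ ℝ^n, let f : ℝ^n → ℝ^n satisfy f(x) ∈ X for every x ∈ X, let k ≥ 1 be a natural number, and let ε ≥ 0 be a real number. Suppose B : ℝ^n → ℝ satisfies: for all x ∈ X with B(x) ≤ (k−1)ε, B(f(x)) ≤ B(x) + ε; and for all x ∈ X with B(x) ≤ 0, B(f^[k](x)) ≤ B(x). Then for every x ∈ X with B(x) ≤ 0 and every i with 0 ≤ i ≤ k−1, one has B(f^[i](x)) ≤ i·ε (in particular B(f^[i](x)) ≤ (k−1)ε), and moreover B(f^[k](x)) ≤ B(x) ≤ 0. In particular the zero-sublevel set {x ∈ X : B(x) ≤ 0} is invariant under the k-fold iterate f^[k]. -/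
/-- **Invariance of the zero-sublevel set under the k-fold iterate.**
Under the one-step and k-step evolution conditions of a k-inductive barrier
certificate, from any state `x ∈ X` with `B x ≤ 0`, the barrier value after
`i` steps (`0 ≤ i ≤ k-1`) is at most `i·ε` (hence at most `(k-1)·ε`), and
after `k` steps it satisfies `B(f^[k] x) ≤ B x ≤ 0`. -/
theorem k_inductive_sublevel_invariance
    (n : ℕ) (X : Set (Fin n → ℝ))
    (f : (Fin n → ℝ) → (Fin n → ℝ)) (hf : ∀ x ∈ X, f x ∈ X)
    (k : ℕ) (hk : 1 ≤ k) (ε : ℝ) (hε : 0 ≤ ε)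
    (B : (Fin n → ℝ) → ℝ)
    (h3 : ∀ x ∈ X, B x ≤ (k - 1 : ℕ) * ε → B (f x) ≤ B x + ε)
    (h4 : ∀ x ∈ X, B x ≤ 0 → B (f^[k] x) ≤ B x) :
    ∀ x ∈ X, B x ≤ 0 →
      (∀ i : ℕ, i ≤ k - 1 →
        B (f^[i] x) ≤ (i : ℝ) * ε ∧ B (f^[i] x) ≤ (k - 1 : ℕ) * ε) ∧
      (B (f^[k] x) ≤ B x ∧ B x ≤ 0) := by
  intro x hx hB0
  have key : ∀ i : ℕ, i ≤ k - 1 → f^[i] x ∈ X ∧ B (f^[i] x) ≤ (i : ℝ) * ε := by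
    intro i
    induction i with
    | zero => intro _; simpa using ⟨hx, hB0⟩
    | succ j ih =>
      intro hj
      have hj' : j ≤ k - 1 := Nat.le_of_succ_le hj
      obtain ⟨hmem, hbd⟩ := ih hj'
      have hle : (j : ℝ) * ε ≤ (k - 1 : ℕ) * ε := by
        apply mul_le_mul_of_nonneg_right _ hε
        exact_mod_cast hj'
      have := h3 _ hmem (hbd.trans hle)
      refine ⟨by rw [Function.iterate_succ_apply']; exact hf _ hmem, ?_⟩
      rw [Function.iterate_succ_apply']
      push_cast
      nlinarith [this, hbd]
  refine ⟨fun i hi => ?_, h4 x hx hB0, hB0⟩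
  obtain ⟨_, hbd⟩ := key i hi
  refine ⟨hbd, hbd.trans ?_⟩
  apply mul_le_mul_of_nonneg_right _ hε
  exact_mod_cast hi
end

section
/- Let n, N, T be positive integers, let A be a real n×N matrix, let 𝔇 : ℝ^n → ℝ^N, let D₀ be a real N×T matrix with X₁ := A · D₀, and let Q : ℝ^n → ℝ^{T×N} satisfy D₀ · Q(x) = I_N for every x ∈ ℝ^n. Define g(x) = A · 𝔇(x), and define f₁(x) = X₁ · Q(x) · 𝔇(x) and f_k(x) = X₁ · Q(f_{k−1}(x)) · 𝔇(f_{k−1}(x)) for k ≥ 2. Let X, X_I, X_U ⊆ ℝ^n with X_I ⊆ X, X_U ⊆ X, and g(x) ∈ X for every x ∈ X. Let k ≥ 1 be a natural number and ε ≥ 0 a real number, and suppose B : ℝ^n → ℝ satisfies: (i) B(x) ≤ 0 for all x ∈ X_I; (ii) B(x) > (k−1)ε for all x ∈ X_U; (iii) B(X₁ · Q(x) · 𝔇(x)) ≤ B(x) + ε for all x ∈ X with B(x) ≤ (k−1)ε; (iv) B(X₁ · Q(f_{k−1}(x)) · 𝔇(f_{k−1}(x))) ≤ B(x) for all x ∈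 X with B(x) ≤ 0. Then every trajectory of the true system x⁺ = A 𝔇(x) starting from any x₀ ∈ X_I never reaches X_U: g^[t](x₀) ∉ X_U for all t ∈ ℕ. -/
/-- **Data-driven k-inductive barrier certificates certify safety of the
unknown true system (Proposition 1 + Theorem 1).** The k-BC conditions
(i)-(iv), stated purely in terms of the data-based representation
`X₁ Q(x) 𝔇(x)` and its k-step recursion `f_k`, guarantee that every trajectory
of the true system `x⁺ = A 𝔇(x)` starting in `X_I` never reaches `X_U`. -/
theorem data_driven_k_inductive_safety
    (n N T : ℕ) (hn : 0 < n) (hN : 0 < N) (hT : 0 < T)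
    (A : Matrix (Fin n) (Fin N) ℝ)
    (𝔇 : (Fin n → ℝ) → (Fin N → ℝ))
    (D₀ : Matrix (Fin N) (Fin T) ℝ)
    (X₁ : Matrix (Fin n) (Fin T) ℝ) (hX₁ : X₁ = A * D₀)
    (Q : (Fin n → ℝ) → Matrix (Fin T) (Fin N) ℝ)
    (hQ : ∀ x : Fin n → ℝ, D₀ * Q x = (1 : Matrix (Fin N) (Fin N) ℝ))
    (g : (Fin n → ℝ) → (Fin n → ℝ)) (hg : ∀ x, g x = A.mulVec (𝔇 x))
    (f : ℕ → (Fin n → ℝ) → (Fin n → ℝ))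
    (hf1 : ∀ x, f 1 x = (X₁ * Q x).mulVec (𝔇 x))
    (hfk : ∀ j : ℕ, 2 ≤ j → ∀ x, f j x = (X₁ * Q (f (j - 1) x)).mulVec (𝔇 (f (j - 1) x)))
    (X X_I X_U : Set (Fin n → ℝ))
    (hI : X_I ⊆ X) (hU : X_U ⊆ X)
    (hXinv : ∀ x ∈ X, g x ∈ X)
    (k : ℕ) (hk : 1 ≤ k) (ε : ℝ) (hε : 0 ≤ ε)
    (B : (Fin n → ℝ) → ℝ)
    (h1 : ∀ x ∈ X_I, B x ≤ 0)
    (h2 : ∀ x ∈ X_U, B x > (k - 1 : ℕ) * ε)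
    (h3 : ∀ x ∈ X, B x ≤ (k - 1 : ℕ) * ε →
      B ((X₁ * Q x).mulVec (𝔇 x)) ≤ B x + ε)
    (h4 : ∀ x ∈ X, B x ≤ 0 → B (f k x) ≤ B x) :
    ∀ x₀ ∈ X_I, ∀ t : ℕ, g^[t] x₀ ∉ X_U := by

  intro x₀ hx₀ t ht
  -- key: X₁ * Q x = A, so the data-based map equals g
  have hXQ : ∀ x : Fin n → ℝ, (X₁ * Q x).mulVec (𝔇 x) = g x := by
    intro x
    rw [hX₁, Matrix.mul_assoc, hQ, Matrix.mul_one, hg]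
  -- f j = g^[j] for j ≥ 1
  have hfg : ∀ j : ℕ, 1 ≤ j → ∀ x, f j x = g^[j] x := by
    intro j
    induction j with
    | zero => intro h; omega
    | succ m ih =>
      intro _ x
      rcases Nat.eq_or_lt_of_le (Nat.one_le_iff_ne_zero.mpr (Nat.succ_ne_zero m)) with h | h
      · obtain rfl : m = 0 := by omega
        rw [hf1, hXQ]; simp
      · have hm : 1 ≤ m := by omega
        have h2m : 2 ≤ m + 1 := by omega
        rw [hfk (m+1) h2m, Nat.add_sub_cancel, ih hm, hXQ, Function.iterate_succ_apply']
  -- trajectory stays in X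
  have hinX : ∀ s : ℕ, g^[s] x₀ ∈ X := by
    intro s
    induction s with
    | zero => exact hI hx₀
    | succ m ih => rw [Function.iterate_succ_apply']; exact hXinv _ ih
  -- B at multiples of k is ≤ 0
  have hL : ∀ q : ℕ, B (g^[q * k] x₀) ≤ 0 := by
    intro q
    induction q with
    | zero => simpa using h1 x₀ hx₀
    | succ m ih =>
      have : (m + 1) * k = k + m * k := by ring
      rw [this, Function.iterate_add_apply]
      have := h4 _ (hinX (m * k)) ih
      rw [hfg k hk] at this
      linarith
  -- within a block, B grows by at most ε per step
  have hM : ∀ q r : ℕ, r < k → B (g^[q * k + r] x₀) ≤ (r : ℝ) * ε := by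
    intro q r
    induction r with
    | zero => intro _; simpa using hL q
    | succ m ih =>
      intro hmk
      have ihm := ih (by omega)
      have hle : (m : ℝ) * ε ≤ ((k - 1 : ℕ) : ℝ) * ε := by
        have : (m : ℝ) ≤ ((k - 1 : ℕ) : ℝ) := by exact_mod_cast (by omega : m ≤ k - 1)
        exact mul_le_mul_of_nonneg_right this hε
      have h3' := h3 _ (hinX (q * k + m)) (le_trans ihm hle)
      rw [hXQ] at h3'
      have : q * k + (m + 1) = (q * k + m) + 1 := by ring
      rw [this, Function.iterate_succ_apply']
      push_cast
      linarith
  -- conclude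
  have hr : t % k < k := Nat.mod_lt _ (by omega)
  have ht' : t / k * k + t % k = t := by
    rw [Nat.mul_comm]; exact Nat.div_add_mod t k
  have hBt : B (g^[t] x₀) ≤ ((t % k : ℕ) : ℝ) * ε := by
    have := hM (t / k) (t % k) hr
    rwa [ht'] at this
  have hle2 : ((t % k : ℕ) : ℝ) * ε ≤ ((k - 1 : ℕ) : ℝ) * ε := by
    have : ((t % k : ℕ) : ℝ) ≤ ((k - 1 : ℕ) : ℝ) := by exact_mod_cast (by omega : t % k ≤ k - 1)
    exact mul_le_mul_of_nonneg_right this hε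
  have := h2 _ ht
  linarith
end

section
/- Let n, T be positive integers, let A be a real n×n matrix, let X₀ be a real n×T matrix with X₁ := A · X₀, and let Q be a real T×n matrix with X₀ · Q = I_n. Let X, X_I, X_U ⊆ ℝ^n with X_I ⊆ X, X_U ⊆ X, and A x ∈ X for every x ∈ X. Let k ≥ 1 be a natural number and ε ≥ 0 a real number, and suppose B : ℝ^n → ℝ satisfies: (i) B(x) ≤ 0 for all x ∈ X_I; (ii) B(x) > (k−1)ε for all x ∈ X_U; (iii) B((X₁ Q) x) ≤ B(x) + ε for all x ∈ X with B(x) ≤ (k−1)ε; (iv) B((X₁ Q)^k x) ≤ B(x) for all x ∈ X with B(x) ≤ 0. Then the linear system x⁺ = A x is safe: for every x₀ ∈ X_I and every t ∈ ℕ, A^t x₀ ∉ X_U. -/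
/-- **Data-driven k-inductive barrier certificates for linear systems
(Proposition 2).** The k-BC conditions (i)-(iv), stated purely in terms of the
data matrices `X₁` and `Q`, certify safety of the unknown linear system
`x⁺ = A x`: every trajectory starting in `X_I` never reaches `X_U`. -/
theorem linear_data_driven_k_inductive_safety
    (n T : ℕ) (hn : 0 < n) (hT : 0 < T)
    (A : Matrix (Fin n) (Fin n) ℝ)
    (X₀ : Matrix (Fin n) (Fin T) ℝ)
    (X₁ : Matrix (Fin n) (Fin T) ℝ) (hX₁ : X₁ = A * X₀)
    (Q : Matrix (Fin T) (Fin n) ℝ)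
    (hQ : X₀ * Q = (1 : Matrix (Fin n) (Fin n) ℝ))
    (X X_I X_U : Set (Fin n → ℝ))
    (hI : X_I ⊆ X) (hU : X_U ⊆ X)
    (hXinv : ∀ x ∈ X, A.mulVec x ∈ X)
    (k : ℕ) (hk : 1 ≤ k) (ε : ℝ) (hε : 0 ≤ ε)
    (B : (Fin n → ℝ) → ℝ)
    (h1 : ∀ x ∈ X_I, B x ≤ 0)
    (h2 : ∀ x ∈ X_U, B x > (k - 1 : ℕ) * ε)
    (h3 : ∀ x ∈ X, B x ≤ (k - 1 : ℕ) * ε → B ((X₁ * Q).mulVec x) ≤ B x + ε)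
    (h4 : ∀ x ∈ X, B x ≤ 0 → B (((X₁ * Q) ^ k).mulVec x) ≤ B x) :
    ∀ x₀ ∈ X_I, ∀ t : ℕ, (A ^ t).mulVec x₀ ∉ X_U := by
  have hA : X₁ * Q = A := by
    rw [hX₁, Matrix.mul_assoc, hQ, Matrix.mul_one]
  rw [hA] at h3 h4
  intro x₀ hx₀ t hmem
  -- invariance of X along powers
  have hinv : ∀ s : ℕ, (A ^ s).mulVec x₀ ∈ X := by
    intro s
    induction s with
    | zero => simpa using hI hx₀
    | succ s ih =>
      have : (A ^ (s + 1)).mulVec x₀ = A.mulVec ((A ^ s).mulVec x₀) := by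
        rw [pow_succ', ← Matrix.mulVec_mulVec]
      rw [this]
      exact hXinv _ ih
  -- zero sublevel along multiples of k
  have hzero : ∀ q : ℕ, B ((A ^ (q * k)).mulVec x₀) ≤ 0 := by
    intro q
    induction q with
    | zero => simpa using h1 _ hx₀
    | succ q ih =>
      have heq : (A ^ ((q + 1) * k)).mulVec x₀
          = (A ^ k).mulVec ((A ^ (q * k)).mulVec x₀) := by
        rw [Matrix.mulVec_mulVec, ← pow_add]
        ring_nf
      rw [heq]
      exact le_trans (h4 _ (hinv _) ih) ih
  -- main bound
  have hmain : ∀ r ≤ k - 1, ∀ q : ℕ, B ((A ^ (q * k + r)).mulVec x₀) ≤ r * ε := by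
    intro r
    induction r with
    | zero => intro _ q; simpa using hzero q
    | succ r ih =>
      intro hr q
      have hr' : r ≤ k - 1 := Nat.le_of_succ_le hr
      have hb := ih hr' q
      have hble : B ((A ^ (q * k + r)).mulVec x₀) ≤ (k - 1 : ℕ) * ε := by
        refine hb.trans (mul_le_mul_of_nonneg_right ?_ hε)
        exact_mod_cast hr'
      have heq : (A ^ (q * k + (r + 1))).mulVec x₀
          = A.mulVec ((A ^ (q * k + r)).mulVec x₀) := by
        rw [Matrix.mulVec_mulVec, ← pow_succ']
        ring_nf
      rw [heq]
      have := h3 _ (hinv _) hble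
      refine this.trans ?_
      have : ((r : ℝ) + 1) * ε = r * ε + ε := by ring
      push_cast
      linarith [hb]
  -- conclude
  have hrlt : t % k ≤ k - 1 := Nat.le_sub_one_of_lt (Nat.mod_lt _ hk)
  have hb : B ((A ^ (t / k * k + t % k)).mulVec x₀) ≤ (t % k : ℕ) * ε :=
    hmain _ hrlt _
  have hdecomp : t / k * k + t % k = t := by rw [Nat.mul_comm]; exact Nat.div_add_mod t k
  rw [hdecomp] at hb
  have hb' : B ((A ^ t).mulVec x₀) ≤ (k - 1 : ℕ) * ε := by
    refine hb.trans (mul_le_mul_of_nonneg_right ?_ hε)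
    exact_mod_cast hrlt
  exact absurd (h2 _ hmem) (not_lt.mpr hb')
end
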